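/- arXiv:1706.01714 — 8 statements merged into one kernel-verified Lean document; each statement's English description precedes it below -/
import Mathlib

section
/- Let G be a group acting on categories C and D, and let (Φ, δ) be a right lax G-functor from C to D. If the natural transformation δ₁ : ρ₁ ∘ Φ → Φ ∘ ρ₁ is an isomorphism, then δ_g is an isomorphism for every g ∈ G, i.e. Φ is a weak G-functor. -/
open CategoryTheory

universe v₁ v₂ v₃ u₁ u₂ u₃

/-- A (weak) action of a group `G` on a category `C`: autoequivalences `ρ g` together with
isomorphisms `φ g h : ρ g ∘ ρ h ≅ ρ (g * h)` satisfying the associativity axiom. -/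
structure GrpAction (G : Type*) [Group G] (C : Type u₁) [Category.{v₁} C] where
  ρ : G → C ⥤ C
  isEquiv : ∀ g : G, (ρ g).IsEquivalence
  φ : ∀ g h : G, ρ h ⋙ ρ g ≅ ρ (g * h)
  assoc : ∀ (g h k : G) (x : C),
    (ρ g).map ((φ h k).hom.app x) ≫ (φ g (h * k)).hom.app x =
      (φ g h).hom.app ((ρ k).obj x) ≫ (φ (g * h) k).hom.app x ≫
        eqToHom (by rw [mul_assoc])

variable {G : Type*} [Group G]
variable {C : Type u₁} [Category.{v₁} C] {D : Type u₂} [Category.{v₂} D]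
  {E : Type u₃} [Category.{v₃} E]

/-- A right lax `G`-functor structure on `Φ : C ⥤ D`: natural transformations
`δ g : ρ g ∘ Φ ⟶ Φ ∘ ρ g` satisfying the pentagon axiom. -/
structure RightLaxStr (σ : GrpAction G C) (τ : GrpAction G D) (Φ : C ⥤ D) where
  δ : ∀ g : G, Φ ⋙ τ.ρ g ⟶ σ.ρ g ⋙ Φ
  pentagon : ∀ (g h : G) (x : C),
    (τ.φ g h).hom.app (Φ.obj x) ≫ (δ (g * h)).app x =
      (τ.ρ g).map ((δ h).app x) ≫ (δ g).app ((σ.ρ h).obj x) ≫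
        Φ.map ((σ.φ g h).hom.app x)

/-- A left lax `G`-functor structure on `Φ : C ⥤ D`: natural transformations
`δ g : Φ ∘ ρ g ⟶ ρ g ∘ Φ` satisfying the dual pentagon axiom. -/
structure LeftLaxStr (σ : GrpAction G C) (τ : GrpAction G D) (Φ : C ⥤ D) where
  δ : ∀ g : G, σ.ρ g ⋙ Φ ⟶ Φ ⋙ τ.ρ g
  pentagon : ∀ (g h : G) (x : C),
    (δ g).app ((σ.ρ h).obj x) ≫ (τ.ρ g).map ((δ h).app x) ≫
        (τ.φ g h).hom.app (Φ.obj x) =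
      Φ.map ((σ.φ g h).hom.app x) ≫ (δ (g * h)).app x

/-- A weak `G`-functor structure on `Φ : C ⥤ D`: natural isomorphisms
`δ g : ρ g ∘ Φ ≅ Φ ∘ ρ g` satisfying the pentagon axiom. -/
structure WeakStr (σ : GrpAction G C) (τ : GrpAction G D) (Φ : C ⥤ D) where
  δ : ∀ g : G, Φ ⋙ τ.ρ g ≅ σ.ρ g ⋙ Φ
  pentagon : ∀ (g h : G) (x : C),
    (τ.φ g h).hom.app (Φ.obj x) ≫ (δ (g * h)).hom.app x =
      (τ.ρ g).map ((δ h).hom.app x) ≫ (δ g).hom.app ((σ.ρ h).obj x) ≫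
        Φ.map ((σ.φ g h).hom.app x)

/-!
With `δ₁` invertible, so are `δ (g * g⁻¹)` and `δ (g⁻¹ * g)`, and the pentagon axiom for
`(g, g⁻¹)` and `(g⁻¹, g)` exhibits the composites `ρ_g δ_{g⁻¹} ≫ δ_g ρ_{g⁻¹}` and
`ρ_{g⁻¹} δ_g ≫ δ_{g⁻¹} ρ_g` as isomorphisms. The second makes `ρ_{g⁻¹} δ_g`, hence `δ_g`, a
monomorphism; the first then makes `δ_g` invertible at every object `ρ_{g⁻¹} x`, and these are
all objects up to isomorphism since `ρ_{g⁻¹}` is an equivalence.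
-/

theorem isIso_of_isIso_comp_of_mono {a b c : C} (f : a ⟶ b) (g : b ⟶ c) [IsIso (f ≫ g)]
    [Mono g] : IsIso g :=
  have : IsSplitEpi g := IsSplitEpi.mk' ⟨inv (f ≫ g) ≫ f, by simp⟩
  isIso_of_mono_of_isSplitEpi g

namespace RightLaxStr

variable {σ : GrpAction G C} {τ : GrpAction G D} {Φ : C ⥤ D} (R : RightLaxStr σ τ Φ)

theorem isIso_map_app_comp_app_of_isIso_mul {g h : G} [IsIso (R.δ (g * h))] (x : C) :
    IsIso ((τ.ρ g).map ((R.δ h).app x) ≫ (R.δ g).app ((σ.ρ h).obj x)) := by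
  have hpent : IsIso (((τ.ρ g).map ((R.δ h).app x) ≫ (R.δ g).app ((σ.ρ h).obj x)) ≫
      Φ.map ((σ.φ g h).hom.app x)) := by
    rw [Category.assoc, ← R.pentagon]
    infer_instance
  exact IsIso.of_isIso_comp_right _ (Φ.map ((σ.φ g h).hom.app x))

theorem mono_app_of_isIso_one (h1 : IsIso (R.δ 1)) (g : G) (x : C) : Mono ((R.δ g).app x) := by
  have : IsIso (R.δ (g⁻¹ * g)) := by rwa [inv_mul_cancel]
  have := R.isIso_map_app_comp_app_of_isIso_mul (g := g⁻¹) (h := g) x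
  have := τ.isEquiv g⁻¹
  have := mono_of_mono ((τ.ρ g⁻¹).map ((R.δ g).app x)) ((R.δ g⁻¹).app ((σ.ρ g).obj x))
  exact (τ.ρ g⁻¹).mono_of_mono_map this

theorem isIso_app_obj_inv_of_isIso_one (h1 : IsIso (R.δ 1)) (g : G) (x : C) :
    IsIso ((R.δ g).app ((σ.ρ g⁻¹).obj x)) := by
  have : IsIso (R.δ (g * g⁻¹)) := by rwa [mul_inv_cancel]
  have := R.isIso_map_app_comp_app_of_isIso_mul (g := g) (h := g⁻¹) x
  have := R.mono_app_of_isIso_one h1 g ((σ.ρ g⁻¹).obj x)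
  exact isIso_of_isIso_comp_of_mono ((τ.ρ g).map ((R.δ g⁻¹).app x)) _

end RightLaxStr

/-- If `δ₁` of a right lax `G`-functor is an isomorphism, then all `δ_g` are
isomorphisms, i.e. `Φ` is a weak `G`-functor. -/
theorem RightLaxStr.isIso_of_isIso_one {σ : GrpAction G C} {τ : GrpAction G D}
    {Φ : C ⥤ D} (R : RightLaxStr σ τ Φ) (h1 : IsIso (R.δ 1)) :
    ∀ g : G, IsIso (R.δ g) := by
  intro g
  have := σ.isEquiv g⁻¹
  rw [NatTrans.isIso_iff_isIso_app]
  intro y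
  exact (NatTrans.isIso_app_iff_of_iso _ ((σ.ρ g⁻¹).objObjPreimageIso y)).1
    (R.isIso_app_obj_inv_of_isIso_one h1 g _)
end

section
/- Let G be a group acting on categories C and D, and let (Φ, δ) be a right lax G-functor from C to D. Let φ₁ : ρ₁ ≅ id denote the unit isomorphism of each action (characterized by ρ₁ φ₁ = φ_{1,1}). If δ₁ : ρ₁ ∘ Φ → Φ ∘ ρ₁ is an isomorphism, then the identity element axiom holds: (Φ φ₁) ∘ δ₁ = φ₁ Φ as natural transformations ρ₁ ∘ Φ → Φ. -/
open CategoryTheory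

universe v₁ v₂ v₃ u₁ u₂ u₃

variable {G : Type*} [Group G]
variable {C : Type u₁} [Category.{v₁} C] {D : Type u₂} [Category.{v₂} D]
  {E : Type u₃} [Category.{v₃} E]

/-! Since `ρ₁` is faithful and `δ₁` is monic, it suffices to prove the identity after applying
`ρ₁` and composing with `δ₁`. Naturality of `δ₁` at `φ₁`, together with `ρ₁ φ₁ = φ_{1,1}` in
both categories, then turns it into the pentagon axiom at `g = h = 1`. -/

namespace RightLaxStr

variable {σ : GrpAction G C} {τ : GrpAction G D} {Φ : C ⥤ D}

theorem δ_app_eq_of_eq (R : RightLaxStr σ τ Φ) {g g' : G} (e : g = g') (x : C) :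
    (R.δ g).app x = eqToHom (by rw [e]) ≫ (R.δ g').app x ≫ eqToHom (by rw [e]) := by
  subst e
  simp

theorem map_unit_comp_δ_one (R : RightLaxStr σ τ Φ)
    (eC : σ.ρ 1 ≅ 𝟭 C)
    (heC : ∀ x : C, (σ.ρ 1).map (eC.hom.app x) =
      (σ.φ 1 1).hom.app x ≫ eqToHom (by rw [one_mul]; rfl))
    (eD : τ.ρ 1 ≅ 𝟭 D)
    (heD : ∀ y : D, (τ.ρ 1).map (eD.hom.app y) =
      (τ.φ 1 1).hom.app y ≫ eqToHom (by rw [one_mul]; rfl))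
    (x : C) :
    (τ.ρ 1).map (eD.hom.app (Φ.obj x)) ≫ (R.δ 1).app x =
      (τ.ρ 1).map ((R.δ 1).app x) ≫ (R.δ 1).app ((σ.ρ 1).obj x) ≫
        Φ.map ((σ.ρ 1).map (eC.hom.app x)) := by
  have pentagon := R.pentagon 1 1 x
  rw [R.δ_app_eq_of_eq (one_mul 1)] at pentagon
  rw [heD, heC, Φ.map_comp, eqToHom_map, ← reassoc_of% pentagon]
  simp

end RightLaxStr

/-- If `δ₁` of a right lax `G`-functor is an isomorphism, then the identity element
axiom `(Φ φ₁) ∘ δ₁ = φ₁ Φ` holds, where `φ₁` denotes the unit isomorphisms of the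
actions (characterized by `ρ₁ φ₁ = φ_{1,1}`). -/
theorem RightLaxStr.unit_axiom_of_isIso_one {σ : GrpAction G C} {τ : GrpAction G D}
    {Φ : C ⥤ D} (R : RightLaxStr σ τ Φ)
    (eC : σ.ρ 1 ≅ 𝟭 C)
    (heC : ∀ x : C, (σ.ρ 1).map (eC.hom.app x) =
      (σ.φ 1 1).hom.app x ≫ eqToHom (by rw [one_mul]; rfl))
    (eD : τ.ρ 1 ≅ 𝟭 D)
    (heD : ∀ y : D, (τ.ρ 1).map (eD.hom.app y) =
      (τ.φ 1 1).hom.app y ≫ eqToHom (by rw [one_mul]; rfl))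
    (h1 : IsIso (R.δ 1)) :
    ∀ x : C, (R.δ 1).app x ≫ Φ.map (eC.hom.app x) = eD.hom.app (Φ.obj x) := by
  intro x
  have := τ.isEquiv 1
  apply (τ.ρ 1).map_injective
  rw [← cancel_mono ((R.δ 1).app x), R.map_unit_comp_δ_one eC heC eD heD x, Functor.map_comp,
    Category.assoc]
  exact congrArg _ ((R.δ 1).naturality (eC.hom.app x))
end

section
/- Let G be a group acting on categories C and D, and let (Φ, δ) be a left lax G-functor from C to D. If δ₁ : Φ ∘ ρ₁ → ρ₁ ∘ Φ is an isomorphism, then δ_g is an isomorphism for every g ∈ G, and the identity element axiom holds: (φ₁ Φ) ∘ δ₁ = Φ φ₁ as natural transformations Φ ∘ ρ₁ → Φ, where φ₁ : ρ₁ ≅ id is the unit isomorphism of each action. -/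
open CategoryTheory

universe v₁ v₂ v₃ u₁ u₂ u₃

variable {G : Type*} [Group G]
variable {C : Type u₁} [Category.{v₁} C] {D : Type u₂} [Category.{v₂} D]
  {E : Type u₃} [Category.{v₃} E]

/-!
Whenever `δ (g * h)` is invertible, the pentagon at `(g, h)` makes `δ g (ρ h x) ≫ ρ g (δ h x)` an
isomorphism, so `δ g (ρ h x)` is a split mono and, `ρ g` being fully faithful, `δ h x` is a split
epi. Since `g * g⁻¹ = 1 = g⁻¹ * g`, this makes `δ g` invertible at every object `ρ g⁻¹ x`, hence
everywhere, as `ρ g⁻¹` is essentially surjective. The identity axiom is the pentagon at `(1, 1)`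
once `φ 1 1` is written as `ρ 1 φ₁` and the epimorphism `δ 1 (ρ 1 x)` is cancelled.
-/

namespace CategoryTheory

lemma isSplitMono_of_isIso_comp {X Y Z : C} (f : X ⟶ Y) (g : Y ⟶ Z) [IsIso (f ≫ g)] :
    IsSplitMono f :=
  IsSplitMono.mk' ⟨g ≫ inv (f ≫ g), by rw [← Category.assoc, IsIso.hom_inv_id]⟩

lemma isSplitEpi_of_isIso_comp {X Y Z : C} (f : X ⟶ Y) (g : Y ⟶ Z) [IsIso (f ≫ g)] :
    IsSplitEpi g :=
  IsSplitEpi.mk' ⟨inv (f ≫ g) ≫ f, by rw [Category.assoc, IsIso.inv_hom_id]⟩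

end CategoryTheory

namespace LeftLaxStr

variable {σ : GrpAction G C} {τ : GrpAction G D} {Φ : C ⥤ D} (L : LeftLaxStr σ τ Φ)

lemma isIso_of_eq {g h : G} (e : g = h) [IsIso (L.δ g)] : IsIso (L.δ h) := by
  subst e
  assumption

lemma app_comp_eqToHom {g h : G} (e : g = h) (x : C) :
    (L.δ g).app x ≫ eqToHom (by rw [e]) = Φ.map (eqToHom (by rw [e])) ≫ (L.δ h).app x := by
  subst e
  simp

lemma isIso_app_comp_map_app_of_isIso_mul {g h : G} [IsIso (L.δ (g * h))] (x : C) :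
    IsIso ((L.δ g).app ((σ.ρ h).obj x) ≫ (τ.ρ g).map ((L.δ h).app x)) := by
  have hpent : (L.δ g).app ((σ.ρ h).obj x) ≫ (τ.ρ g).map ((L.δ h).app x) =
      (Φ.map ((σ.φ g h).hom.app x) ≫ (L.δ (g * h)).app x) ≫
        inv ((τ.φ g h).hom.app (Φ.obj x)) := by
    rw [← L.pentagon]
    simp
  rw [hpent]
  infer_instance

lemma isSplitMono_app_of_isIso_mul {g h : G} [IsIso (L.δ (g * h))] (x : C) :
    IsSplitMono ((L.δ g).app ((σ.ρ h).obj x)) :=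
  have := L.isIso_app_comp_map_app_of_isIso_mul (g := g) (h := h) x
  isSplitMono_of_isIso_comp _ ((τ.ρ g).map ((L.δ h).app x))

lemma isSplitEpi_app_of_isIso_mul {g h : G} [IsIso (L.δ (g * h))] (x : C) :
    IsSplitEpi ((L.δ h).app x) := by
  have := τ.isEquiv g
  have := L.isIso_app_comp_map_app_of_isIso_mul (g := g) (h := h) x
  rw [← (τ.ρ g).isSplitEpi_iff]
  exact isSplitEpi_of_isIso_comp ((L.δ g).app ((σ.ρ h).obj x)) _

lemma isIso_of_isIso_one [IsIso (L.δ 1)] (g : G) : IsIso (L.δ g) := by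
  have := L.isIso_of_eq (inv_mul_cancel g).symm
  have := L.isIso_of_eq (mul_inv_cancel g).symm
  have := σ.isEquiv g⁻¹
  rw [NatTrans.isIso_iff_isIso_app]
  intro x
  rw [NatTrans.isIso_app_iff_of_iso _ ((σ.ρ g⁻¹).objObjPreimageIso x).symm]
  set y := (σ.ρ g⁻¹).objPreimage x
  have := L.isSplitMono_app_of_isIso_mul (g := g) (h := g⁻¹) y
  have := L.isSplitEpi_app_of_isIso_mul (g := g⁻¹) (h := g) ((σ.ρ g⁻¹).obj y)
  exact isIso_of_mono_of_isSplitEpi _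

lemma app_one_comp_hom_app (eC : σ.ρ 1 ≅ 𝟭 C)
    (heC : ∀ x : C, (σ.ρ 1).map (eC.hom.app x) =
      (σ.φ 1 1).hom.app x ≫ eqToHom (by rw [one_mul]; rfl))
    (eD : τ.ρ 1 ≅ 𝟭 D)
    (heD : ∀ y : D, (τ.ρ 1).map (eD.hom.app y) =
      (τ.φ 1 1).hom.app y ≫ eqToHom (by rw [one_mul]; rfl))
    (x : C) [Epi ((L.δ 1).app ((σ.ρ 1).obj x))] :
    (L.δ 1).app x ≫ eD.hom.app (Φ.obj x) = Φ.map (eC.hom.app x) := by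
  have := τ.isEquiv 1
  apply (τ.ρ 1).map_injective
  rw [← cancel_epi ((L.δ 1).app ((σ.ρ 1).obj x))]
  have hnat := (L.δ 1).naturality (eC.hom.app x)
  have hpent := L.pentagon 1 1 x
  have hcongr := L.app_comp_eqToHom (one_mul (1 : G)) x
  simp only [Functor.comp_map] at hnat
  rw [Functor.map_comp, heD, ← hnat, heC]
  simp only [Functor.map_comp, Category.assoc, reassoc_of% hpent]
  rw [hcongr]
  rfl

end LeftLaxStr

/-- If `δ₁` of a left lax `G`-functor is an isomorphism, then all `δ_g` are
isomorphisms and the identity element axiom `(φ₁ Φ) ∘ δ₁ = Φ φ₁` holds, where `φ₁`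
denotes the unit isomorphisms of the actions (characterized by `ρ₁ φ₁ = φ_{1,1}`). -/
theorem LeftLaxStr.weak_of_isIso_one {σ : GrpAction G C} {τ : GrpAction G D}
    {Φ : C ⥤ D} (L : LeftLaxStr σ τ Φ)
    (eC : σ.ρ 1 ≅ 𝟭 C)
    (heC : ∀ x : C, (σ.ρ 1).map (eC.hom.app x) =
      (σ.φ 1 1).hom.app x ≫ eqToHom (by rw [one_mul]; rfl))
    (eD : τ.ρ 1 ≅ 𝟭 D)
    (heD : ∀ y : D, (τ.ρ 1).map (eD.hom.app y) =
      (τ.φ 1 1).hom.app y ≫ eqToHom (by rw [one_mul]; rfl))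
    (h1 : IsIso (L.δ 1)) :
    (∀ g : G, IsIso (L.δ g)) ∧
    (∀ x : C, (L.δ 1).app x ≫ eD.hom.app (Φ.obj x) = Φ.map (eC.hom.app x)) :=
  have := h1
  ⟨L.isIso_of_isIso_one, fun x => L.app_one_comp_hom_app eC heC eD heD x⟩
end

section
/- Let G be a group acting on categories C and D, and let Ψ : D → C and Φ : C → D be weak G-functors forming a G-adjoint pair, with Ψ left adjoint to Φ, unit ε : id_D → Φ ∘ Ψ and counit η : Ψ ∘ Φ → id_C, both G-natural. Then the induced functors Ψ^G : D^G → C^G and Φ^G : C^G → D^G on categories of equivariant objects form an adjoint pair, with Ψ^G left adjoint to Φ^G, whose unit and counit are the induced transformations ε^G and η^G. -/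
/-!
Lifting to equivariant objects is functorial: `Φ ↦ Φ^G` sends the identity and composite weak
`G`-structures to the identity and composite functors, up to isomorphisms whose underlying
morphisms are identities, and a `G`-natural `μ` lifts to `μ^G` with the same components.
With respect to these identity and composite structures, `ε : 𝟭 ⟶ Ψ ⋙ Φ` and
`η : Φ ⋙ Ψ ⟶ 𝟭` are `G`-natural, so they lift, and the triangle identities descend because a morphism of equivariant objects is
determined by its underlying morphism.
-/


open CategoryTheory

universe v₁ v₂ v₃ u₁ u₂ u₃

variable {G : Type*} [Group G]
variable {C : Type u₁} [Category.{v₁} C] {D : Type u₂} [Category.{v₂} D]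
  {E : Type u₃} [Category.{v₃} E]

/-- A `G`-equivariant object: an object `c` with isomorphisms `θ g : c ≅ ρ g c`
compatible with the group action. -/
structure EquivObj (σ : GrpAction G C) where
  c : C
  θ : ∀ g : G, c ≅ (σ.ρ g).obj c
  compat : ∀ g h : G,
    (θ (g * h)).hom = (θ g).hom ≫ (σ.ρ g).map ((θ h).hom) ≫ (σ.φ g h).hom.app c

/-- Morphisms of equivariant objects: morphisms of underlying objects commuting with
the linearizations. -/
@[ext]
structure EquivHom {σ : GrpAction G C} (x y : EquivObj σ) where
  f : x.c ⟶ y.c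
  comm : ∀ g : G, (x.θ g).hom ≫ (σ.ρ g).map f = f ≫ (y.θ g).hom

instance EquivObj.category (σ : GrpAction G C) : Category (EquivObj σ) where
  Hom x y := EquivHom x y
  id x := ⟨𝟙 x.c, by intro g; simp⟩
  comp u v := ⟨u.f ≫ v.f, by
    intro g
    rw [Functor.map_comp, ← Category.assoc, u.comm, Category.assoc, v.comm,
      ← Category.assoc]⟩
  id_comp u := by apply EquivHom.ext; exact Category.id_comp u.f
  comp_id u := by apply EquivHom.ext; exact Category.comp_id u.f
  assoc u v w := by apply EquivHom.ext; exact Category.assoc u.f v.f w.f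

@[simp] lemma EquivObj.id_f {σ : GrpAction G C} (x : EquivObj σ) :
    (𝟙 x : EquivHom x x).f = 𝟙 x.c := rfl

@[simp] lemma EquivObj.comp_f {σ : GrpAction G C} {x y z : EquivObj σ}
    (u : x ⟶ y) (v : y ⟶ z) : (u ≫ v).f = u.f ≫ v.f := rfl

@[ext] lemma EquivObj.hom_ext {σ : GrpAction G C} {x y : EquivObj σ}
    (u v : x ⟶ y) (h : u.f = v.f) : u = v := EquivHom.ext h

/-- The forgetful functor from equivariant objects. -/
def equivForget (σ : GrpAction G C) : EquivObj σ ⥤ C where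
  obj x := x.c
  map u := u.f

namespace WeakStr

variable {σ : GrpAction G C} {τ : GrpAction G D} {Φ : C ⥤ D}

/-- The lift of an equivariant object along a weak `G`-functor. -/
def liftObj (W : WeakStr σ τ Φ) (a : EquivObj σ) : EquivObj τ where
  c := Φ.obj a.c
  θ g := Φ.mapIso (a.θ g) ≪≫ ((W.δ g).app a.c).symm
  compat g h := by
    have nat : (W.δ g).inv.app a.c ≫ (τ.ρ g).map (Φ.map (a.θ h).hom) =
        Φ.map ((σ.ρ g).map (a.θ h).hom) ≫ (W.δ g).inv.app ((σ.ρ h).obj a.c) :=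
      ((W.δ g).inv.naturality (a.θ h).hom).symm
    have pent : (W.δ g).inv.app ((σ.ρ h).obj a.c) ≫
        (τ.ρ g).map ((W.δ h).inv.app a.c) ≫ (τ.φ g h).hom.app (Φ.obj a.c) =
        Φ.map ((σ.φ g h).hom.app a.c) ≫ (W.δ (g * h)).inv.app a.c := by
      rw [← Iso.app_inv, ← Iso.app_inv, ← Iso.app_inv, Iso.eq_comp_inv]
      simp only [Iso.app_inv, Iso.app_hom, Category.assoc]
      rw [W.pentagon g h a.c]
      slice_lhs 2 3 => rw [← Functor.map_comp, Iso.inv_hom_id_app]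
      simp
    simp only [Iso.trans_hom, Functor.mapIso_hom, Iso.symm_hom, Iso.app_inv,
      Functor.map_comp, Category.assoc]
    rw [a.compat g h]
    simp only [Functor.map_comp, Category.assoc]
    rw [reassoc_of% nat, pent]

/-- The induced functor between categories of equivariant objects. -/
def equivFunctor (W : WeakStr σ τ Φ) : EquivObj σ ⥤ EquivObj τ where
  obj := W.liftObj
  map {a b} u := ⟨Φ.map u.f, by
    intro g
    have nat : (W.δ g).inv.app a.c ≫ (τ.ρ g).map (Φ.map u.f) =
        Φ.map ((σ.ρ g).map u.f) ≫ (W.δ g).inv.app b.c :=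
      ((W.δ g).inv.naturality u.f).symm
    simp only [liftObj, Iso.trans_hom, Functor.mapIso_hom, Iso.symm_hom, Iso.app_inv,
      Category.assoc]
    rw [nat, ← Category.assoc, ← Φ.map_comp, u.comm g, Φ.map_comp,
      Category.assoc]⟩
  map_id a := by apply EquivObj.hom_ext; simp [liftObj]
  map_comp u v := by apply EquivObj.hom_ext; simp [liftObj]

end WeakStr

namespace EquivObj

variable {σ : GrpAction G C}

def isoMk {x y : EquivObj σ} (e : x.c ≅ y.c)
    (comm : ∀ g : G, (x.θ g).hom ≫ (σ.ρ g).map e.hom = e.hom ≫ (y.θ g).hom) : x ≅ y where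
  hom := ⟨e.hom, comm⟩
  inv := ⟨e.inv, fun g => by
    rw [← cancel_epi e.hom, e.hom_inv_id_assoc, ← reassoc_of% (comm g)]
    simp⟩

end EquivObj

namespace WeakStr

variable {σ : GrpAction G C} {τ : GrpAction G D} {υ : GrpAction G E}

@[simp] lemma equivFunctor_obj_c {Φ : C ⥤ D} (W : WeakStr σ τ Φ) (a : EquivObj σ) :
    (W.equivFunctor.obj a).c = Φ.obj a.c := rfl

@[simp] lemma equivFunctor_obj_θ_hom {Φ : C ⥤ D} (W : WeakStr σ τ Φ) (a : EquivObj σ) (g : G) :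
    ((W.equivFunctor.obj a).θ g).hom = Φ.map (a.θ g).hom ≫ (W.δ g).inv.app a.c := rfl

@[simp] lemma equivFunctor_map_f {Φ : C ⥤ D} (W : WeakStr σ τ Φ) {a b : EquivObj σ}
    (u : a ⟶ b) : (W.equivFunctor.map u).f = Φ.map u.f := rfl

protected def id (σ : GrpAction G C) : WeakStr σ σ (𝟭 C) where
  δ _ := Iso.refl _
  pentagon g h x := by simp

def comp {Ψ : C ⥤ D} {Φ : D ⥤ E} (WΨ : WeakStr σ τ Ψ) (WΦ : WeakStr τ υ Φ) :
    WeakStr σ υ (Ψ ⋙ Φ) where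
  δ g := Functor.isoWhiskerLeft Ψ (WΦ.δ g) ≪≫ Functor.isoWhiskerRight (WΨ.δ g) Φ
  pentagon g h x := by
    have nat := (WΦ.δ g).hom.naturality ((WΨ.δ h).hom.app x)
    dsimp only [Functor.comp_obj, Functor.comp_map, Iso.trans_hom, Functor.isoWhiskerLeft_hom,
      Functor.isoWhiskerRight_hom, NatTrans.comp_app, Functor.whiskerLeft_app,
      Functor.whiskerRight_app] at nat ⊢
    simp only [Category.assoc, Functor.map_comp]
    rw [reassoc_of% WΦ.pentagon g h (Ψ.obj x), ← Φ.map_comp, WΨ.pentagon g h x]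
    simp only [Functor.map_comp, reassoc_of% nat]

@[simp] lemma id_δ_hom_app (σ : GrpAction G C) (g : G) (x : C) :
    ((WeakStr.id σ).δ g).hom.app x = 𝟙 _ := rfl

@[simp] lemma comp_δ_hom_app {Ψ : C ⥤ D} {Φ : D ⥤ E} (WΨ : WeakStr σ τ Ψ)
    (WΦ : WeakStr τ υ Φ) (g : G) (x : C) :
    ((WΨ.comp WΦ).δ g).hom.app x = (WΦ.δ g).hom.app (Ψ.obj x) ≫ Φ.map ((WΨ.δ g).hom.app x) :=
  rfl

@[simps!]
def idEquivFunctorIso (σ : GrpAction G C) : (WeakStr.id σ).equivFunctor ≅ 𝟭 (EquivObj σ) :=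
  NatIso.ofComponents (fun a => EquivObj.isoMk (Iso.refl a.c) (by simp [WeakStr.id]))
    (fun u => by ext; exact (Category.comp_id _).trans (Category.id_comp _).symm)

@[simps!]
def compEquivFunctorIso {Ψ : C ⥤ D} {Φ : D ⥤ E} (WΨ : WeakStr σ τ Ψ) (WΦ : WeakStr τ υ Φ) :
    (WΨ.comp WΦ).equivFunctor ≅ WΨ.equivFunctor ⋙ WΦ.equivFunctor :=
  NatIso.ofComponents (fun a => EquivObj.isoMk (Iso.refl _) (by simp [comp]))
    (fun u => by ext; exact (Category.comp_id _).trans (Category.id_comp _).symm)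

def IsGNatural {Φ₁ Φ₂ : C ⥤ D} (W₁ : WeakStr σ τ Φ₁) (W₂ : WeakStr σ τ Φ₂) (μ : Φ₁ ⟶ Φ₂) :
    Prop :=
  ∀ (g : G) (x : C),
    (τ.ρ g).map (μ.app x) ≫ (W₂.δ g).hom.app x = (W₁.δ g).hom.app x ≫ μ.app ((σ.ρ g).obj x)

def IsGNatural.equivNatTrans {Φ₁ Φ₂ : C ⥤ D} {W₁ : WeakStr σ τ Φ₁} {W₂ : WeakStr σ τ Φ₂}
    {μ : Φ₁ ⟶ Φ₂} (hμ : IsGNatural W₁ W₂ μ) : W₁.equivFunctor ⟶ W₂.equivFunctor where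
  app a := ⟨μ.app a.c, fun g => by
    have hμ' : (W₁.δ g).inv.app a.c ≫ (τ.ρ g).map (μ.app a.c) =
        μ.app ((σ.ρ g).obj a.c) ≫ (W₂.δ g).inv.app a.c := by
      rw [← cancel_epi ((W₁.δ g).hom.app a.c), Iso.hom_inv_id_app_assoc,
        ← reassoc_of% (hμ g a.c), Iso.hom_inv_id_app]
      simp
    show (Φ₁.map (a.θ g).hom ≫ (W₁.δ g).inv.app a.c) ≫ (τ.ρ g).map (μ.app a.c) =
      μ.app a.c ≫ Φ₂.map (a.θ g).hom ≫ (W₂.δ g).inv.app a.c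
    rw [Category.assoc, hμ', μ.naturality_assoc]⟩
  naturality _ _ u := by ext; exact μ.naturality u.f

@[simp] lemma IsGNatural.equivNatTrans_app_f {Φ₁ Φ₂ : C ⥤ D} {W₁ : WeakStr σ τ Φ₁}
    {W₂ : WeakStr σ τ Φ₂} {μ : Φ₁ ⟶ Φ₂} (hμ : IsGNatural W₁ W₂ μ) (a : EquivObj σ) :
    (hμ.equivNatTrans.app a).f = μ.app a.c := rfl

def equivAdjunction {Φ : C ⥤ D} {Ψ : D ⥤ C} {WΦ : WeakStr σ τ Φ} {WΨ : WeakStr τ σ Ψ}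
    (adj : Ψ ⊣ Φ) (hunit : IsGNatural (WeakStr.id τ) (WΨ.comp WΦ) adj.unit)
    (hcounit : IsGNatural (WΦ.comp WΨ) (WeakStr.id σ) adj.counit) :
    WΨ.equivFunctor ⊣ WΦ.equivFunctor where
  unit := (idEquivFunctorIso τ).inv ≫ hunit.equivNatTrans ≫ (compEquivFunctorIso WΨ WΦ).hom
  counit := (compEquivFunctorIso WΦ WΨ).inv ≫ hcounit.equivNatTrans ≫ (idEquivFunctorIso σ).hom
  left_triangle_components b := by ext; simp
  right_triangle_components a := by ext; simp

@[simp] lemma equivAdjunction_unit_app_f {Φ : C ⥤ D} {Ψ : D ⥤ C} {WΦ : WeakStr σ τ Φ}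
    {WΨ : WeakStr τ σ Ψ} (adj : Ψ ⊣ Φ) (hunit : IsGNatural (WeakStr.id τ) (WΨ.comp WΦ) adj.unit)
    (hcounit : IsGNatural (WΦ.comp WΨ) (WeakStr.id σ) adj.counit) (b : EquivObj τ) :
    ((equivAdjunction adj hunit hcounit).unit.app b).f = adj.unit.app b.c := by
  simp [equivAdjunction]

@[simp] lemma equivAdjunction_counit_app_f {Φ : C ⥤ D} {Ψ : D ⥤ C} {WΦ : WeakStr σ τ Φ}
    {WΨ : WeakStr τ σ Ψ} (adj : Ψ ⊣ Φ) (hunit : IsGNatural (WeakStr.id τ) (WΨ.comp WΦ) adj.unit)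
    (hcounit : IsGNatural (WΦ.comp WΨ) (WeakStr.id σ) adj.counit) (a : EquivObj σ) :
    ((equivAdjunction adj hunit hcounit).counit.app a).f = adj.counit.app a.c := by
  simp [equivAdjunction]

end WeakStr

/-- A `G`-adjoint pair of weak `G`-functors (an adjunction whose unit and counit
are `G`-natural) induces an adjoint pair between the categories of equivariant
objects, with unit and counit induced by those of the original adjunction. -/
theorem WeakStr.gAdjunction_descends {σ : GrpAction G C} {τ : GrpAction G D}
    {Φ : C ⥤ D} {Ψ : D ⥤ C} (WΦ : WeakStr σ τ Φ) (WΨ : WeakStr τ σ Ψ)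
    (adj : Ψ ⊣ Φ)
    (hunit : ∀ (g : G) (d : D),
      (τ.ρ g).map (adj.unit.app d) ≫ (WΦ.δ g).hom.app (Ψ.obj d) ≫
          Φ.map ((WΨ.δ g).hom.app d) =
        adj.unit.app ((τ.ρ g).obj d))
    (hcounit : ∀ (g : G) (x : C),
      (σ.ρ g).map (adj.counit.app x) =
        (WΨ.δ g).hom.app (Φ.obj x) ≫ Ψ.map ((WΦ.δ g).hom.app x) ≫
          adj.counit.app ((σ.ρ g).obj x)) :
    ∃ adjG : WΨ.equivFunctor ⊣ WΦ.equivFunctor,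
      (∀ b : EquivObj τ, (equivForget τ).map (adjG.unit.app b) = adj.unit.app b.c) ∧
      (∀ a : EquivObj σ, (equivForget σ).map (adjG.counit.app a) = adj.counit.app a.c) := by
  have hε : IsGNatural (WeakStr.id τ) (WΨ.comp WΦ) adj.unit := fun g d => by
    simpa using hunit g d
  have hη : IsGNatural (WΦ.comp WΨ) (WeakStr.id σ) adj.counit := fun g x => by
    simpa using hcounit g x
  exact ⟨equivAdjunction adj hε hη, equivAdjunction_unit_app_f adj hε hη,
    equivAdjunction_counit_app_f adj hε hη⟩
end

section
/- Let G be a group acting on categories C and D, let (Φ, δ) : C → D be a weak G-functor, and let Ψ : D → C be a left adjoint of Φ with unit ε : id_D → Φ ∘ Ψ and counit η : Ψ ∘ Φ → id_C. Define δ'_g : Ψ ∘ ρ_g → ρ_g ∘ Ψ as the mate of δ_g, i.e. δ'_g = (η ρ_g Ψ) ∘ (Ψ δ_g Ψ) ∘ (Ψ ρ_g ε). Then the transformations δ'_g satisfy the dual pentagon axiom, making (Ψ, δ') a left lax G-functor, and each δ'_g is an isomorphism, so Ψ is a weak G-functor. -/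
open CategoryTheory

universe v₁ v₂ v₃ u₁ u₂ u₃

variable {G : Type*} [Group G]
variable {C : Type u₁} [Category.{v₁} C] {D : Type u₂} [Category.{v₂} D]
  {E : Type u₃} [Category.{v₃} E]

/-! The structure maps of `Ψ` are the mates `δ'_g` of the `δ_g` under `Ψ ⊣ Φ`. Taking mates is a
bijection compatible with pasting of squares (`mateEquiv_vcomp`) and with whiskering along the
sides that are not adjoints, so the dual pentagon for `δ'` is the mate of the pentagon for `δ`.
Mates of isomorphisms need not be isomorphisms, but here the functors `ρ_g` are equivalences: the
mate of `δ_g` along the adjunctions `ρ_g ⊣ ρ_g⁻¹` is invertible, and it is the conjugate of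
`δ'_g` (`iterated_mateEquiv_conjugateEquiv`), so `δ'_g` is invertible too. -/

namespace CategoryTheory

section Mates

variable {A₁ A₂ A₃ A₄ : Type*} [Category A₁] [Category A₂] [Category A₃] [Category A₄]
  {L₁ : A₁ ⥤ A₂} {R₁ : A₂ ⥤ A₁} {L₂ : A₃ ⥤ A₄} {R₂ : A₄ ⥤ A₃}
  (adj₁ : L₁ ⊣ R₁) (adj₂ : L₂ ⊣ R₂)

theorem mateEquiv_app {U : A₁ ⥤ A₃} {V : A₂ ⥤ A₄} (w : TwoSquare U L₁ L₂ V) (b : A₂) :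
    (mateEquiv adj₁ adj₂ w).natTrans.app b =
      adj₂.unit.app (U.obj (R₁.obj b)) ≫ R₂.map (w.natTrans.app (R₁.obj b)) ≫
        R₂.map (V.map (adj₁.counit.app b)) := by
  simp [mateEquiv_apply]

theorem mateEquiv_whiskerTop {U U' : A₁ ⥤ A₃} {V : A₂ ⥤ A₄} (w : TwoSquare U' L₁ L₂ V)
    (μ : U ⟶ U') :
    mateEquiv adj₁ adj₂ (w.whiskerTop μ) = (mateEquiv adj₁ adj₂ w).whiskerRight μ := by
  ext b
  simp only [mateEquiv_app, TwoSquare.whiskerTop_app, TwoSquare.whiskerRight_app]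
  simp [adj₂.unit_naturality_assoc]

theorem mateEquiv_whiskerBottom {U : A₁ ⥤ A₃} {V V' : A₂ ⥤ A₄} (w : TwoSquare U L₁ L₂ V)
    (ν : V ⟶ V') :
    mateEquiv adj₁ adj₂ (w.whiskerBottom ν) = (mateEquiv adj₁ adj₂ w).whiskerLeft ν := by
  ext b
  simp only [mateEquiv_app, TwoSquare.whiskerBottom_app, TwoSquare.whiskerLeft_app,
    Category.assoc, ← R₂.map_comp]
  exact congrArg (fun f => _ ≫ R₂.map (_ ≫ f)) (ν.naturality _).symm

theorem isIso_mateEquiv {U : A₁ ⥤ A₃} {V : A₂ ⥤ A₄} [IsIso adj₁.counit] [IsIso adj₂.unit]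
    (w : TwoSquare U L₁ L₂ V) [IsIso w.natTrans] :
    IsIso (mateEquiv adj₁ adj₂ w).natTrans := by
  have : ∀ b, IsIso ((mateEquiv adj₁ adj₂ w).natTrans.app b) := fun b => by
    rw [mateEquiv_app]
    infer_instance
  exact NatIso.isIso_of_isIso_app _

theorem isIso_mateEquiv_symm_of_isEquivalence {U : A₁ ⥤ A₃} {V : A₂ ⥤ A₄} [U.IsEquivalence]
    [V.IsEquivalence] (w : TwoSquare R₁ V U R₂) [IsIso w.natTrans] :
    IsIso ((mateEquiv adj₁ adj₂).symm w).natTrans := by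
  have iterated_mate := iterated_mateEquiv_conjugateEquiv adj₁ adj₂ U.adjunction V.adjunction
    ((mateEquiv adj₁ adj₂).symm w)
  rw [Equiv.apply_symm_apply] at iterated_mate
  have : IsIso (conjugateEquiv (adj₁.comp V.adjunction) (U.adjunction.comp adj₂)
      ((mateEquiv adj₁ adj₂).symm w)) := by
    rw [← iterated_mate]
    exact isIso_mateEquiv _ _ w
  exact conjugateEquiv_of_iso (adj₁.comp V.adjunction) (U.adjunction.comp adj₂) _

end Mates

end CategoryTheory

namespace RightLaxStr

variable {σ : GrpAction G C} {τ : GrpAction G D} {Φ : C ⥤ D} {Ψ : D ⥤ C}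

def mate (R : RightLaxStr σ τ Φ) (adj : Ψ ⊣ Φ) (g : G) : TwoSquare (τ.ρ g) Ψ Ψ (σ.ρ g) :=
  (mateEquiv adj adj).symm (.mk _ _ _ _ (R.δ g))

theorem mateEquiv_mate (R : RightLaxStr σ τ Φ) (adj : Ψ ⊣ Φ) (g : G) :
    mateEquiv adj adj (R.mate adj g) = .mk _ _ _ _ (R.δ g) :=
  Equiv.apply_symm_apply _ _

open TwoSquare in
theorem mate_pentagon (R : RightLaxStr σ τ Φ) (adj : Ψ ⊣ Φ) (g h : G) :
    (R.mate adj h ≫ₕ R.mate adj g).whiskerBottom (σ.φ g h).hom =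
      (R.mate adj (g * h)).whiskerTop (τ.φ g h).hom := by
  apply (mateEquiv adj adj).injective
  rw [mateEquiv_whiskerBottom, mateEquiv_whiskerTop, mateEquiv_vcomp, mateEquiv_mate,
    mateEquiv_mate, mateEquiv_mate]
  ext x
  simpa using (R.pentagon g h x).symm

def leftAdjoint (R : RightLaxStr σ τ Φ) (adj : Ψ ⊣ Φ) : LeftLaxStr τ σ Ψ where
  δ := R.mate adj
  pentagon g h x := by
    simpa using congr_app (R.mate_pentagon adj g h) x

theorem leftAdjoint_δ_app (R : RightLaxStr σ τ Φ) (adj : Ψ ⊣ Φ) (g : G) (d : D) :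
    ((R.leftAdjoint adj).δ g).app d =
      Ψ.map ((τ.ρ g).map (adj.unit.app d)) ≫ Ψ.map ((R.δ g).app (Ψ.obj d)) ≫
        adj.counit.app ((σ.ρ g).obj (Ψ.obj d)) := by
  simp [leftAdjoint, mate, mateEquiv]

theorem isIso_leftAdjoint_δ (R : RightLaxStr σ τ Φ) (adj : Ψ ⊣ Φ) (g : G) [IsIso (R.δ g)] :
    IsIso ((R.leftAdjoint adj).δ g) :=
  have := σ.isEquiv g
  have := τ.isEquiv g
  isIso_mateEquiv_symm_of_isEquivalence adj adj (R.δ g)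

end RightLaxStr

def WeakStr.toRightLaxStr {σ : GrpAction G C} {τ : GrpAction G D} {Φ : C ⥤ D}
    (W : WeakStr σ τ Φ) : RightLaxStr σ τ Φ where
  δ g := (W.δ g).hom
  pentagon := W.pentagon

instance WeakStr.isIso_toRightLaxStr_δ {σ : GrpAction G C} {τ : GrpAction G D} {Φ : C ⥤ D}
    (W : WeakStr σ τ Φ) (g : G) : IsIso (W.toRightLaxStr.δ g) :=
  inferInstanceAs (IsIso (W.δ g).hom)

/-- The mates of the structure maps of a weak `G`-functor `Φ` along an adjunction
`Ψ ⊣ Φ` make the left adjoint `Ψ` a left lax `G`-functor, and all the mates are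
isomorphisms, so `Ψ` becomes a weak `G`-functor. -/
theorem WeakStr.leftAdjoint_weak {σ : GrpAction G C} {τ : GrpAction G D}
    {Φ : C ⥤ D} {Ψ : D ⥤ C} (W : WeakStr σ τ Φ) (adj : Ψ ⊣ Φ) :
    ∃ L : LeftLaxStr τ σ Ψ,
      (∀ (g : G) (d : D),
        (L.δ g).app d =
          Ψ.map ((τ.ρ g).map (adj.unit.app d)) ≫
            Ψ.map ((W.δ g).hom.app (Ψ.obj d)) ≫
            adj.counit.app ((σ.ρ g).obj (Ψ.obj d))) ∧
      ∀ g : G, IsIso (L.δ g) :=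
  ⟨W.toRightLaxStr.leftAdjoint adj, W.toRightLaxStr.leftAdjoint_δ_app adj,
    fun g => W.toRightLaxStr.isIso_leftAdjoint_δ adj g⟩
end

section
/- Let G be a group acting on categories C and D, let (Φ, δ) : C → D be a weak G-functor, and let Ψ : D → C be a left adjoint of Φ, equipped with the weak G-structure δ'_g given by the mates of the δ_g along the adjunction. Then the unit ε : id_D → Φ ∘ Ψ and the counit η : Ψ ∘ Φ → id_C of the adjunction are G-natural transformations; hence Ψ and Φ are G-adjoint. -/
open CategoryTheory

universe v₁ v₂ v₃ u₁ u₂ u₃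

variable {G : Type*} [Group G]
variable {C : Type u₁} [Category.{v₁} C] {D : Type u₂} [Category.{v₂} D]
  {E : Type u₃} [Category.{v₃} E]

/-!
The structure maps `δ'_g` of `Ψ` are by construction the mates of the `δ_g` for the square
formed by `ρ_g` on both sides and the adjunction `Ψ ⊣ Φ` on top and bottom. The two
`G`-naturality squares are then exactly the two transposed forms of the mate correspondence,
one expressed through the unit and one through the counit.
-/

universe v₄ u₄

namespace CategoryTheory

variable {C₁ : Type u₁} {C₂ : Type u₂} {C₃ : Type u₃} {C₄ : Type u₄}
  [Category.{v₁} C₁] [Category.{v₂} C₂] [Category.{v₃} C₃] [Category.{v₄} C₄]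
  {T : C₁ ⥤ C₃} {B : C₂ ⥤ C₄} {L₁ : C₁ ⥤ C₂} {R₁ : C₂ ⥤ C₁} {L₂ : C₃ ⥤ C₄} {R₂ : C₄ ⥤ C₃}

theorem mateEquiv_symm_app (adj₁ : L₁ ⊣ R₁) (adj₂ : L₂ ⊣ R₂)
    (β : TwoSquare R₁ B T R₂) (c : C₁) :
    ((mateEquiv adj₁ adj₂).symm β).natTrans.app c =
      L₂.map (T.map (adj₁.unit.app c)) ≫ L₂.map (β.app (L₁.obj c)) ≫
        adj₂.counit.app (B.obj (L₁.obj c)) := by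
  simp [mateEquiv]

end CategoryTheory

/-- If the left adjoint `Ψ` of a weak `G`-functor `Φ` is equipped with the weak
`G`-structure given by the mates `δ'_g` of the structure maps `δ_g`, then the unit
and the counit of the adjunction are `G`-natural; hence `Ψ` and `Φ` are `G`-adjoint. -/
theorem WeakStr.unit_counit_gNatural {σ : GrpAction G C} {τ : GrpAction G D}
    {Φ : C ⥤ D} {Ψ : D ⥤ C} (W : WeakStr σ τ Φ) (adj : Ψ ⊣ Φ)
    (δ' : ∀ g : G, τ.ρ g ⋙ Ψ ⟶ Ψ ⋙ σ.ρ g)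
    (hδ' : ∀ (g : G) (d : D),
      (δ' g).app d =
        Ψ.map ((τ.ρ g).map (adj.unit.app d)) ≫
          Ψ.map ((W.δ g).hom.app (Ψ.obj d)) ≫
          adj.counit.app ((σ.ρ g).obj (Ψ.obj d))) :
    (∀ (g : G) (d : D),
      (τ.ρ g).map (adj.unit.app d) ≫ (W.δ g).hom.app (Ψ.obj d) =
        adj.unit.app ((τ.ρ g).obj d) ≫ Φ.map ((δ' g).app d)) ∧
    (∀ (g : G) (x : C),
      (δ' g).app (Φ.obj x) ≫ (σ.ρ g).map (adj.counit.app x) =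
        Ψ.map ((W.δ g).hom.app x) ≫ adj.counit.app ((σ.ρ g).obj x)) := by
  have hmate : ∀ g, δ' g = (mateEquiv adj adj).symm (W.δ g).hom := fun g =>
    NatTrans.ext <| funext fun d => (hδ' g d).trans (mateEquiv_symm_app adj adj _ d).symm
  refine ⟨fun g d => ?_, fun g x => ?_⟩
  · rw [hmate]
    exact unit_mateEquiv_symm adj adj (W.δ g).hom d
  · rw [hmate]
    exact (mateEquiv_counit_symm adj adj (W.δ g).hom x).symm
end

section
/- Let G be a group acting on categories C and D and let (Φ, δ) : C → D be a weak G-functor. Then Φ is an equivalence of categories if and only if there exists a weak G-functor Ψ : D → C together with G-natural isomorphisms Ψ ∘ Φ ≅ id_C and Φ ∘ Ψ ≅ id_D. -/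
open CategoryTheory

universe v₁ v₂ v₃ u₁ u₂ u₃

variable {G : Type*} [Group G]
variable {C : Type u₁} [Category.{v₁} C] {D : Type u₂} [Category.{v₂} D]
  {E : Type u₃} [Category.{v₃} E]

/-!
If `Φ` is an equivalence with counit `ε`, the structure isomorphisms of its quasi-inverse `Ψ` are
forced by asking `ε` to be `G`-natural: as `Φ` is fully faithful, `δ'_g` is the unique isomorphism
with `Φ δ'_g = δ_g⁻¹ ≫ ρ_g ε ≫ ε⁻¹`. The pentagon for `δ'` and the `G`-naturality of the unit are
then checked after applying the faithful functor `Φ`, where they reduce to the pentagon for `δ`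
and naturality. Conversely, the isomorphisms `α` and `β` alone exhibit `Φ` as an equivalence.
-/

namespace WeakStr

variable {σ : GrpAction G C} {τ : GrpAction G D}

lemma map_ρ_map {Φ : C ⥤ D} (W : WeakStr σ τ Φ) (g : G) {x y : C} (f : x ⟶ y) :
    Φ.map ((σ.ρ g).map f) =
      (W.δ g).inv.app x ≫ (τ.ρ g).map (Φ.map f) ≫ (W.δ g).hom.app y :=
  (NatIso.naturality_1 (W.δ g) f).symm

lemma pentagon_inv {Φ : C ⥤ D} (W : WeakStr σ τ Φ) (g h : G) (x : C) :
    Φ.map ((σ.φ g h).hom.app x) ≫ (W.δ (g * h)).inv.app x =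
      (W.δ g).inv.app ((σ.ρ h).obj x) ≫ (τ.ρ g).map ((W.δ h).inv.app x) ≫
        (τ.φ g h).hom.app (Φ.obj x) := by
  rw [← cancel_epi ((τ.ρ g).map ((W.δ h).hom.app x) ≫ (W.δ g).hom.app ((σ.ρ h).obj x)),
    Category.assoc, Category.assoc, ← reassoc_of% W.pentagon]
  simp [← Functor.map_comp_assoc]

section Equivalence

variable (e : C ≌ D) (W : WeakStr σ τ e.functor)

noncomputable def inverseδ (g : G) : e.inverse ⋙ σ.ρ g ≅ τ.ρ g ⋙ e.inverse :=
  NatIso.ofComponents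
    (fun d => e.fullyFaithfulFunctor.preimageIso
      ((W.δ g).symm.app (e.inverse.obj d) ≪≫ (τ.ρ g).mapIso (e.counitIso.app d) ≪≫
        e.counitIso.symm.app ((τ.ρ g).obj d)))
    (fun _ => e.functor.map_injective (by
      simp [W.map_ρ_map, ← Functor.map_comp_assoc (τ.ρ g) (e.counitInv.app _)]))

lemma functor_map_inverseδ_hom_app (g : G) (d : D) :
    e.functor.map ((W.inverseδ e g).hom.app d) =
      (W.δ g).inv.app (e.inverse.obj d) ≫ (τ.ρ g).map (e.counit.app d) ≫
        e.counitInv.app ((τ.ρ g).obj d) := by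
  simp [inverseδ]

lemma inverseδ_pentagon (g h : G) (d : D) :
    (σ.φ g h).hom.app (e.inverse.obj d) ≫ (W.inverseδ e (g * h)).hom.app d =
      (σ.ρ g).map ((W.inverseδ e h).hom.app d) ≫ (W.inverseδ e g).hom.app ((τ.ρ h).obj d) ≫
        e.inverse.map ((τ.φ g h).hom.app d) := by
  apply e.functor.map_injective
  rw [← cancel_mono (e.counit.app ((τ.ρ (g * h)).obj d))]
  have φ_naturality : (τ.ρ g).map ((τ.ρ h).map (e.counit.app d)) ≫ (τ.φ g h).hom.app d =
      (τ.φ g h).hom.app _ ≫ (τ.ρ (g * h)).map (e.counit.app d) :=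
    (τ.φ g h).hom.naturality _
  simp [functor_map_inverseδ_hom_app, W.map_ρ_map, reassoc_of% W.pentagon_inv, φ_naturality]

noncomputable def inverse : WeakStr τ σ e.inverse :=
  ⟨W.inverseδ e, W.inverseδ_pentagon e⟩

lemma ρ_map_unitInv_app (g : G) (x : C) :
    (σ.ρ g).map (e.unitInv.app x) =
      ((W.inverse e).δ g).hom.app (e.functor.obj x) ≫ e.inverse.map ((W.δ g).hom.app x) ≫
        e.unitInv.app ((σ.ρ g).obj x) := by
  apply e.functor.map_injective
  simp [inverse, functor_map_inverseδ_hom_app, W.map_ρ_map, e.counit_app_functor]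

lemma ρ_map_counit_app (g : G) (d : D) :
    (τ.ρ g).map (e.counit.app d) =
      (W.δ g).hom.app (e.inverse.obj d) ≫ e.functor.map (((W.inverse e).δ g).hom.app d) ≫
        e.counit.app ((τ.ρ g).obj d) := by
  simp [inverse, functor_map_inverseδ_hom_app]

end Equivalence

end WeakStr

/-- A weak `G`-functor is an equivalence of categories if and only if it admits a
weakly `G`-functorial quasi-inverse with `G`-natural unit and counit isomorphisms;
such a functor is called a weak `G`-equivalence. -/
theorem WeakStr.isEquivalence_iff {σ : GrpAction G C} {τ : GrpAction G D}
    {Φ : C ⥤ D} (W : WeakStr σ τ Φ) :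
    Φ.IsEquivalence ↔
      ∃ (Ψ : D ⥤ C) (WΨ : WeakStr τ σ Ψ) (α : Φ ⋙ Ψ ≅ 𝟭 C) (β : Ψ ⋙ Φ ≅ 𝟭 D),
        (∀ (g : G) (x : C),
          (σ.ρ g).map (α.hom.app x) =
            (WΨ.δ g).hom.app (Φ.obj x) ≫ Ψ.map ((W.δ g).hom.app x) ≫
              α.hom.app ((σ.ρ g).obj x)) ∧
        (∀ (g : G) (d : D),
          (τ.ρ g).map (β.hom.app d) =
            (W.δ g).hom.app (Ψ.obj d) ≫ Φ.map ((WΨ.δ g).hom.app d) ≫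
              β.hom.app ((τ.ρ g).obj d)) := by
  constructor
  · intro
    let e := Φ.asEquivalence
    exact ⟨e.inverse, W.inverse e, e.unitIso.symm, e.counitIso,
      W.ρ_map_unitInv_app e, W.ρ_map_counit_app e⟩
  · rintro ⟨Ψ, -, α, β, -⟩
    exact (CategoryTheory.Equivalence.mk Φ Ψ α.symm β).isEquivalence_functor
end

section
/- Let C be a pretriangulated category and let G be a group acting on C such that each ρ_g is a triangulated autoequivalence (additive, commuting with the shift, sending distinguished triangles to distinguished triangles) and each φ_{g,h} is compatible with the shift. Let A and B be full subcategories of C closed under isomorphism and shifts such that: Hom_C(b, a) = 0 for all a ∈ A, b ∈ B; every object c of C fits into a distinguished triangle b → c → a → b[1] with a ∈ A, b ∈ B; and ρ_g(A) ⊆ A, ρ_g(B) ⊆ B for all g. Suppose the category C^G of equivariant objects carries a pretriangulated structure whose shift is induced from C and whose distinguished triangles are exactly those whose image under the forgetful functor C^G → C is distinguished. Let A^G and B^G be the full subcategories of C^G of equivariant objects whose underlying object lies in A, respectively B. Then C^G = ⟨A^G, B^G⟩ is a semiorthogonal decomposition: Hom_{C^G}(y, x) = 0 for all x ∈ A^G,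 y ∈ B^G, and every object of C^G fits into a distinguished triangle y → z → x → y[1] in C^G with x ∈ A^G and y ∈ B^G. -/
/-!
Decomposition triangles `b ⟶ c ⟶ a ⟶ b⟦1⟧` are functorial: since `Hom(B, A)` and
`Hom(B, A⟦-1⟧)` vanish, every morphism `c ⟶ c'` restricts uniquely to `b ⟶ b'`. Restricting the
isomorphisms `θ_g : z ≅ ρ_g z` in this way puts an equivariant structure on the `B`-part `b` of
`z`, the cocycle condition being inherited by uniqueness. A cone of the resulting equivariant map
`b ⟶ z` forgets to a cone of `b ⟶ z.c` in `C`, so its third vertex is isomorphic to `a ∈ A`.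
-/

open CategoryTheory CategoryTheory.Limits CategoryTheory.Pretriangulated

universe v₁ u₁

variable {G : Type*} [Group G] {C : Type u₁} [Category.{v₁} C]

def UniqueLifts {b c b' c' : C} (f : b ⟶ c) (f' : b' ⟶ c') : Prop :=
  ∀ u : c ⟶ c', ∃! β : b ⟶ b', f ≫ u = β ≫ f'

lemma UniqueLifts.exists_iso {b c b' c' : C} {f : b ⟶ c} {f' : b' ⟶ c'}
    (h₁₂ : UniqueLifts f f') (h₂₁ : UniqueLifts f' f)
    (h₁₁ : UniqueLifts f f) (h₂₂ : UniqueLifts f' f') (e : c ≅ c') :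
    ∃ β : b ≅ b', f ≫ e.hom = β.hom ≫ f' := by
  obtain ⟨β, hβ, -⟩ := h₁₂ e.hom
  obtain ⟨γ, hγ, -⟩ := h₂₁ e.inv
  refine ⟨⟨β, γ, (h₁₁ (𝟙 c)).unique ?_ (by simp), (h₂₂ (𝟙 c')).unique ?_ (by simp)⟩, hβ⟩
  · rw [Category.comp_id, Category.assoc, ← hγ, ← Category.assoc, ← hβ,
      Category.assoc, e.hom_inv_id, Category.comp_id]
  · rw [Category.comp_id, Category.assoc, ← hβ, ← Category.assoc, ← hγ,
      Category.assoc, e.inv_hom_id, Category.comp_id]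

section Pretriangulated

variable [HasZeroObject C] [Preadditive C] [HasShift C ℤ]
  [∀ n : ℤ, (shiftFunctor C n).Additive] [Pretriangulated C]

lemma Triangle.uniqueLifts_mor₁ {b c : C} (f : b ⟶ c) (T : Triangle C) (hT : T ∈ distTriang C)
    (h₀ : ∀ g : b ⟶ T.obj₃, g = 0) (h₁ : ∀ g : b ⟶ T.obj₃⟦(-1 : ℤ)⟧, g = 0) :
    UniqueLifts f T.mor₁ := by
  intro u
  obtain ⟨β, hβ⟩ := Triangle.coyoneda_exact₂ T hT (f ≫ u) (h₀ _)
  refine ⟨β, hβ, fun β' hβ' => ?_⟩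
  have hdiff : (β' - β) ≫ T.invRotate.mor₂ = 0 := by
    change (β' - β) ≫ T.mor₁ = 0
    rw [Preadditive.sub_comp, ← hβ', ← hβ, sub_self]
  obtain ⟨w, hw⟩ := Triangle.coyoneda_exact₂ _ (inv_rot_of_distTriang _ hT) (β' - β) hdiff
  have hw₀ : w = 0 := h₁ w
  rw [hw₀, zero_comp] at hw
  exact sub_eq_zero.mp hw

def decompositionMorphisms (A B : Set C) : MorphismProperty C :=
  fun b c f => b ∈ B ∧ ∃ (a : C) (g : c ⟶ a) (h : a ⟶ b⟦(1 : ℤ)⟧),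
    a ∈ A ∧ Triangle.mk f g h ∈ distTriang C

lemma uniqueLifts_of_decompositionMorphisms {A B : Set C}
    (hA_shift : ∀ (n : ℤ) (x : C), x ∈ A → x⟦n⟧ ∈ A)
    (hsemi : ∀ a ∈ A, ∀ b ∈ B, ∀ f : b ⟶ a, f = 0)
    ⦃b c b' c' : C⦄ (f : b ⟶ c) (f' : b' ⟶ c')
    (hf : decompositionMorphisms A B f) (hf' : decompositionMorphisms A B f') :
    UniqueLifts f f' := by
  obtain ⟨hb, -⟩ := hf
  obtain ⟨-, a', g', h', ha', hT'⟩ := hf'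
  exact Triangle.uniqueLifts_mor₁ f _ hT' (hsemi _ ha' _ hb)
    (hsemi _ (hA_shift _ _ ha') _ hb)

lemma decompositionMorphisms_map {D : Type*} [Category D] [HasZeroObject D] [Preadditive D]
    [HasShift D ℤ] [∀ n : ℤ, (shiftFunctor D n).Additive] [Pretriangulated D]
    {A B : Set C} {A' B' : Set D} (F : C ⥤ D) [F.CommShift ℤ] [F.IsTriangulated]
    (hA : ∀ x ∈ A, F.obj x ∈ A') (hB : ∀ x ∈ B, F.obj x ∈ B')
    {b c : C} {f : b ⟶ c} (hf : decompositionMorphisms A B f) :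
    decompositionMorphisms A' B' (F.map f) := by
  obtain ⟨hb, a, g, h, ha, hT⟩ := hf
  exact ⟨hB _ hb, F.obj a, F.map g, F.map h ≫ (F.commShiftIso (1 : ℤ)).hom.app b, hA _ ha,
    F.map_distinguished _ hT⟩

end Pretriangulated

lemma EquivObj.exists_equivHom_lift {σ : GrpAction G C} (z : EquivObj σ) {b : C}
    (f : b ⟶ z.c) (P : MorphismProperty C)
    (hP : ∀ ⦃b c b' c' : C⦄ (f : b ⟶ c) (f' : b' ⟶ c'), P f → P f' → UniqueLifts f f')
    (hf : P f) (hρf : ∀ g : G, P ((σ.ρ g).map f)) :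
    ∃ (y : EquivObj σ) (u : y ⟶ z), Arrow.mk u.f = Arrow.mk f := by
  have hθ (g : G) : ∃ θ : b ≅ (σ.ρ g).obj b, f ≫ (z.θ g).hom = θ.hom ≫ (σ.ρ g).map f :=
    UniqueLifts.exists_iso (hP _ _ hf (hρf g)) (hP _ _ (hρf g) hf) (hP _ _ hf hf)
      (hP _ _ (hρf g) (hρf g)) (z.θ g)
  choose θ hθ using hθ
  have compat (g h : G) : (θ (g * h)).hom = (θ g).hom ≫ (σ.ρ g).map (θ h).hom ≫
      (σ.φ g h).hom.app b := by
    refine (hP _ _ hf (hρf (g * h)) (z.θ (g * h)).hom).unique (hθ (g * h)) ?_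
    rw [z.compat g h, ← Category.assoc, hθ g, Category.assoc, ← Functor.map_comp_assoc, hθ h]
    simp only [Functor.map_comp, Category.assoc]
    rw [← (σ.φ g h).hom.naturality f]
    rfl
  exact ⟨⟨b, θ, compat⟩, ⟨f, fun g => (hθ g).symm⟩, rfl⟩

theorem elagin_semiorthogonal
    [HasZeroObject C] [Preadditive C] [HasShift C ℤ]
    [∀ n : ℤ, (shiftFunctor C n).Additive] [Pretriangulated C]
    (σ : GrpAction G C)
    [∀ g : G, (σ.ρ g).CommShift ℤ] [∀ g : G, (σ.ρ g).Additive]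
    [∀ g : G, (σ.ρ g).IsTriangulated]
    [∀ g h : G, NatTrans.CommShift (σ.φ g h).hom ℤ]
    [Preadditive (EquivObj σ)] [HasShift (EquivObj σ) ℤ] [HasZeroObject (EquivObj σ)]
    [∀ n : ℤ, (shiftFunctor (EquivObj σ) n).Additive] [Pretriangulated (EquivObj σ)]
    [(equivForget σ).CommShift ℤ] [(equivForget σ).Additive]
    (hdist : ∀ T : Triangle (EquivObj σ),
      (T ∈ distTriang (EquivObj σ)) ↔ ((equivForget σ).mapTriangle.obj T ∈ distTriang C))
    (A B : Set C)
    (hA_iso : ∀ {x y : C}, (x ≅ y) → x ∈ A → y ∈ A)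
    (hB_iso : ∀ {x y : C}, (x ≅ y) → x ∈ B → y ∈ B)
    (hA_shift : ∀ (n : ℤ) (x : C), x ∈ A → x⟦n⟧ ∈ A)
    (hB_shift : ∀ (n : ℤ) (x : C), x ∈ B → x⟦n⟧ ∈ B)
    (hsemi : ∀ a ∈ A, ∀ b ∈ B, ∀ f : b ⟶ a, f = 0)
    (hdec : ∀ c : C, ∃ (a b : C) (_ : a ∈ A) (_ : b ∈ B) (f : b ⟶ c) (g : c ⟶ a)
      (h : a ⟶ b⟦(1 : ℤ)⟧), Triangle.mk f g h ∈ distTriang C)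
    (hGA : ∀ (g : G) (x : C), x ∈ A → (σ.ρ g).obj x ∈ A)
    (hGB : ∀ (g : G) (x : C), x ∈ B → (σ.ρ g).obj x ∈ B) :
    (∀ (x y : EquivObj σ), x.c ∈ A → y.c ∈ B → ∀ u : y ⟶ x, u = 0) ∧
    (∀ z : EquivObj σ, ∃ (x y : EquivObj σ) (_ : x.c ∈ A) (_ : y.c ∈ B)
      (f : y ⟶ z) (g : z ⟶ x) (h : x ⟶ y⟦(1 : ℤ)⟧),
        Triangle.mk f g h ∈ distTriang (EquivObj σ)) := by
  refine ⟨fun x y hx hy u =>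
    EquivHom.ext ((hsemi _ hx _ hy u.f).trans ((equivForget σ).map_zero y x).symm), fun z => ?_⟩
  obtain ⟨a, b, ha, hb, f, g, h, hT⟩ := hdec z.c
  have hf : decompositionMorphisms A B f := ⟨hb, a, g, h, ha, hT⟩
  obtain ⟨y, u, hu⟩ := z.exists_equivHom_lift f _
    (uniqueLifts_of_decompositionMorphisms hA_shift hsemi) hf
    (fun g => decompositionMorphisms_map (σ.ρ g) (hGA g) (hGB g) hf)
  have hyb : y.c = b := congrArg Comma.left hu
  obtain ⟨x, v, w, hxyz⟩ := distinguished_cocone_triangle u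
  -- the image of this triangle and `hT` are both cones of the same arrow
  obtain ⟨e, -, -⟩ := exists_iso_of_arrow_iso _ _ hT ((hdist _).mp hxyz) (eqToIso hu.symm)
  exact ⟨x, y, hA_iso (Triangle.π₃.mapIso e) ha, hyb ▸ hb, u, v, w, hxyz⟩
end
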